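/- Every finite-state automorphism of the regular rooted d-ary tree T of finite order has finite orbit-signalizer. In particular, if a finite-state automorphism has infinite orbit-signalizer, then it has infinite order. -/

import Mathlib

open List

/-- Vertices of the rooted `d`-ary tree `T`: finite words over the alphabet
`X = Fin d`. -/
abbrev Vertex (d : ℕ) := List (Fin d)

/-- `g` is an automorphism of the rooted `d`-ary tree: a bijection of the
vertex set `X*` preserving word length and the prefix relation. -/
def IsTreeAut {d : ℕ} (g : Equiv.Perm (Vertex d)) : Prop :=
  (∀ v : Vertex d, (g v).length = v.length) ∧
    ∀ v w : Vertex d, g v <+: g (v ++ w)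

theorem IsTreeAut.prefix_mono {d : ℕ} {g : Equiv.Perm (Vertex d)} (hg : IsTreeAut g)
    {u u' : Vertex d} (h : u <+: u') : g u <+: g u' := by
  obtain ⟨t, rfl⟩ := h
  exact hg.2 u t

/-- The automorphism group `Aut(T)` of the rooted `d`-ary tree, as a subgroup
of the group of permutations of the vertex set. -/
def treeAut (d : ℕ) : Subgroup (Equiv.Perm (Vertex d)) where
  carrier := {g | IsTreeAut g}
  one_mem' := ⟨fun _ => rfl, fun v w => ⟨w, rfl⟩⟩
  mul_mem' := by
    intro g h hg hh
    obtain ⟨hg1, hg2⟩ := hg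
    obtain ⟨hh1, hh2⟩ := hh
    refine ⟨fun v => ?_, fun v w => ?_⟩
    · simp [Equiv.Perm.mul_apply, hg1, hh1]
    · obtain ⟨t, ht⟩ := hh2 v w
      simp only [Equiv.Perm.mul_apply]
      rw [← ht]
      exact hg2 (h v) t
  inv_mem' := by
    intro g hgmem
    obtain ⟨hg1, hg2⟩ := hgmem
    have hg : IsTreeAut g := ⟨hg1, hg2⟩
    have hlen' : ∀ v : Vertex d, (g⁻¹ v).length = v.length := by
      intro v
      conv_rhs => rw [← show g (g⁻¹ v) = v from Equiv.apply_symm_apply g v]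
      rw [hg1]
    refine ⟨hlen', fun v w => ?_⟩
    have hle : (g⁻¹ v).length ≤ (g⁻¹ (v ++ w)).length := by
      have h1 := hlen' v
      have h2 := hlen' (v ++ w)
      rw [List.length_append] at h2
      omega
    have htp : (g⁻¹ (v ++ w)).take (g⁻¹ v).length <+: g⁻¹ (v ++ w) :=
      List.take_prefix _ _
    have hgtp : g ((g⁻¹ (v ++ w)).take (g⁻¹ v).length) <+: v ++ w := by
      have := hg.prefix_mono htp
      rwa [show g (g⁻¹ (v ++ w)) = v ++ w from Equiv.apply_symm_apply g (v ++ w)] at this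
    have hlen_tp : (g ((g⁻¹ (v ++ w)).take (g⁻¹ v).length)).length = v.length := by
      rw [hg1, List.length_take, min_eq_left hle, hlen' v]
    have hveq : g ((g⁻¹ (v ++ w)).take (g⁻¹ v).length) = v := by
      have h1 := List.prefix_iff_eq_take.mp hgtp
      have h2 := List.prefix_iff_eq_take.mp (List.prefix_append v w)
      rw [h1, hlen_tp]
      exact h2.symm
    have hkey : (g⁻¹ (v ++ w)).take (g⁻¹ v).length = g⁻¹ v := by
      apply g.injective
      rw [hveq, show g (g⁻¹ v) = v from Equiv.apply_symm_apply g v]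
    rw [← hkey]
    exact htp

open scoped Classical in
/-- The state (section) `g|_v` of `g` at the vertex `v` : the unique
automorphism satisfying `g (v ++ w) = g v ++ (g|_v) w` for all `w`. -/
noncomputable def state {d : ℕ} (g : Equiv.Perm (Vertex d)) (v : Vertex d) :
    Equiv.Perm (Vertex d) :=
  if h : Function.Bijective (fun w : Vertex d => (g (v ++ w)).drop v.length) then
    Equiv.ofBijective _ h
  else 1

/-- A finite-state automorphism: one having finitely many states.  The
finite-state automorphisms form the group `F(X)`. -/
def FiniteState {d : ℕ} (g : Equiv.Perm (Vertex d)) : Prop :=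
  (Set.range fun v : Vertex d => state g v).Finite

/-- The cardinality of the orbit `Orb_a(v)` of the vertex `v` under the cyclic
group generated by `a`. -/
noncomputable def orbitCard {d : ℕ} (a : Equiv.Perm (Vertex d)) (v : Vertex d) : ℕ :=
  Nat.card (Set.range fun n : ℤ => (a ^ n) v)

/-- The orbit-signalizer `OS(a) = { a^m|_v : v ∈ X^*, m = |Orb_a(v)| }`. -/
noncomputable def OS {d : ℕ} (a : Equiv.Perm (Vertex d)) : Set (Equiv.Perm (Vertex d)) :=
  {s | ∃ v : Vertex d, s = state (a ^ orbitCard a v) v}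

/-- `a` has finite orbit-signalizer. -/
def FiniteOS {d : ℕ} (a : Equiv.Perm (Vertex d)) : Prop := (OS a).Finite

/-- A self-similar (state-closed) subgroup. -/
def SelfSimilar {d : ℕ} (G : Subgroup (Equiv.Perm (Vertex d))) : Prop :=
  ∀ g ∈ G, ∀ v : Vertex d, state g v ∈ G

/-- A contracting group: there is a finite set `N ⊆ G` such that every
`g ∈ G` has all its states in `N` from some level on. -/
def ContractingGroup {d : ℕ} (G : Subgroup (Equiv.Perm (Vertex d))) : Prop :=
  ∃ N : Set (Equiv.Perm (Vertex d)), N.Finite ∧ N ⊆ (G : Set (Equiv.Perm (Vertex d))) ∧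
    ∀ g ∈ G, ∃ n : ℕ, ∀ v : Vertex d, n ≤ v.length → state g v ∈ N

/-- A contracting automorphism: the self-similar group generated by all of its
states is contracting. -/
def ContractingAut {d : ℕ} (f : Equiv.Perm (Vertex d)) : Prop :=
  ContractingGroup (Subgroup.closure (Set.range fun v : Vertex d => state f v))

/-- The activity sequence `θ_k(g)`: the number of vertices `v` of level `k`
whose state `g|_v` acts nontrivially on the first level `X`. -/
noncomputable def theta {d : ℕ} (g : Equiv.Perm (Vertex d)) (k : ℕ) : ℕ :=
  Nat.card {v : Vertex d // v.length = k ∧ ∃ x : Fin d, state g v [x] ≠ [x]}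

/-- A bounded automorphism: a finite-state automorphism with bounded activity
sequence.  The bounded automorphisms form the group `Pol(0)`. -/
def BoundedAut {d : ℕ} (g : Equiv.Perm (Vertex d)) : Prop :=
  FiniteState g ∧ ∃ C : ℕ, ∀ k : ℕ, theta g k ≤ C

/-- A polynomial automorphism (an element of `Pol(∞)`): a finite-state
automorphism whose activity sequence is polynomially bounded. -/
def PolyAut {d : ℕ} (g : Equiv.Perm (Vertex d)) : Prop :=
  FiniteState g ∧ ∃ p : Polynomial ℕ, ∀ k : ℕ, theta g k ≤ p.eval k

/-- A finitary automorphism (an element of `Pol(-1)`): all states at some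
level are trivial. -/
def Finitary {d : ℕ} (g : Equiv.Perm (Vertex d)) : Prop :=
  ∃ k : ℕ, ∀ v : Vertex d, v.length = k → state g v = 1

/-- A functionally recursive automorphism: a member of some finitely generated
self-similar subgroup of `Aut(T)`.  These form the group `FR(X)`. -/
def FunctionallyRecursive {d : ℕ} (g : Equiv.Perm (Vertex d)) : Prop :=
  ∃ G : Subgroup (Equiv.Perm (Vertex d)), G ≤ treeAut d ∧ SelfSimilar G ∧
    (∃ S : Set (Equiv.Perm (Vertex d)), S.Finite ∧ G = Subgroup.closure S) ∧ g ∈ G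

/-!
A finite-order automorphism `a` has only finitely many distinct powers, and every element of
`OS(a)` is a state of one of them. The finite-state automorphisms of the tree form a monoid,
because the states of a product are products of states: `(g * h)|_v = g|_{h v} * h|_v`.
Hence `OS(a)` lies in a finite union of finite sets.
-/

variable {d : ℕ}

namespace IsTreeAut

variable {g h : Equiv.Perm (Vertex d)}

theorem apply_append (hg : IsTreeAut g) (v w : Vertex d) :
    g (v ++ w) = g v ++ (g (v ++ w)).drop v.length := by
  conv_lhs => rw [← List.take_append_drop (g v).length (g (v ++ w)),
    ← List.prefix_iff_eq_take.mp (hg.2 v w), hg.1 v]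

theorem bijective_drop_apply_append (hg : IsTreeAut g) (v : Vertex d) :
    Function.Bijective (fun w : Vertex d => (g (v ++ w)).drop v.length) := by
  refine ⟨fun w w' hw => List.append_cancel_left (as := v) (g.injective ?_), fun u => ?_⟩
  · rw [hg.apply_append v w, hg.apply_append v w']
    exact congrArg _ hw
  · have hginv : IsTreeAut g⁻¹ := (treeAut d).inv_mem hg
    obtain ⟨t, ht⟩ : v <+: g⁻¹ (g v ++ u) := by
      simpa using hginv.2 (g v) u
    refine ⟨t, ?_⟩
    dsimp only
    rw [ht, ← Equiv.Perm.mul_apply, mul_inv_cancel, Equiv.Perm.one_apply, ← hg.1 v,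
      List.drop_left]

theorem state_apply (hg : IsTreeAut g) (v w : Vertex d) :
    state g v w = (g (v ++ w)).drop v.length := by
  rw [state, dif_pos (hg.bijective_drop_apply_append v)]
  rfl

theorem apply_append_state (hg : IsTreeAut g) (v w : Vertex d) :
    g (v ++ w) = g v ++ state g v w := by
  rw [hg.state_apply]
  exact hg.apply_append v w

theorem state_mul (hg : IsTreeAut g) (hh : IsTreeAut h) (v : Vertex d) :
    state (g * h) v = state g (h v) * state h v := by
  have hgh : IsTreeAut (g * h) := (treeAut d).mul_mem hg hh
  ext1 w
  rw [hgh.state_apply, Equiv.Perm.mul_apply, Equiv.Perm.mul_apply, hh.apply_append_state,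
    hg.apply_append_state, ← hh.1 v, ← hg.1 (h v), List.drop_left]

end IsTreeAut

theorem state_one (v : Vertex d) : state (1 : Equiv.Perm (Vertex d)) v = 1 := by
  ext1 w
  rw [IsTreeAut.state_apply (treeAut d).one_mem]
  exact List.drop_left

theorem finiteState_one : FiniteState (1 : Equiv.Perm (Vertex d)) := by
  simp only [FiniteState, state_one, Set.range_const, Set.finite_singleton]

theorem FiniteState.mul {g h : Equiv.Perm (Vertex d)} (hg : IsTreeAut g) (hh : IsTreeAut h)
    (fg : FiniteState g) (fh : FiniteState h) : FiniteState (g * h) := by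
  refine (fg.image2 (· * ·) fh).subset ?_
  rintro s ⟨v, rfl⟩
  exact ⟨_, ⟨h v, rfl⟩, _, ⟨v, rfl⟩, (hg.state_mul hh v).symm⟩

variable (d) in
def finiteStateTreeAut : Submonoid (Equiv.Perm (Vertex d)) where
  carrier := {g | IsTreeAut g ∧ FiniteState g}
  one_mem' := ⟨(treeAut d).one_mem, finiteState_one⟩
  mul_mem' := fun ⟨hg, fg⟩ ⟨hh, fh⟩ => ⟨(treeAut d).mul_mem hg hh, fg.mul hg hh fh⟩

theorem OS_subset_biUnion_powers (a : Equiv.Perm (Vertex d)) :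
    OS a ⊆ ⋃ g ∈ (Submonoid.powers a : Set (Equiv.Perm (Vertex d))),
      Set.range (state g) := by
  rintro s ⟨v, rfl⟩
  exact Set.mem_biUnion ⟨_, rfl⟩ ⟨v, rfl⟩

theorem finiteOS_of_finiteState_finiteOrder_general
    (d : ℕ) (a : Equiv.Perm (Vertex d))
    (ha : IsTreeAut a) (hfa : FiniteState a) :
    (IsOfFinOrder a → FiniteOS a) ∧ (¬ FiniteOS a → ¬ IsOfFinOrder a) := by
  have finiteOS (hfin : IsOfFinOrder a) : FiniteOS a := by
    have powers_le : Submonoid.powers a ≤ finiteStateTreeAut d :=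
      Submonoid.powers_le.mpr ⟨ha, hfa⟩
    refine (hfin.finite_powers.biUnion fun g hg => ?_).subset (OS_subset_biUnion_powers a)
    exact (powers_le hg).2
  exact ⟨finiteOS, mt finiteOS⟩

/-- Every finite-state automorphism of finite order has
finite orbit-signalizer; in particular a finite-state automorphism with
infinite orbit-signalizer has infinite order. -/
theorem finiteOS_of_finiteState_finiteOrder
    (d : ℕ) (hd : 2 ≤ d) (a : Equiv.Perm (Vertex d))
    (ha : IsTreeAut a) (hfa : FiniteState a) :
    (IsOfFinOrder a → FiniteOS a) ∧ (¬ FiniteOS a → ¬ IsOfFinOrder a) :=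
  finiteOS_of_finiteState_finiteOrder_general d a ha hfa
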